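/- For every μ ∈ (1/4, 3/4), the mapped steepening Gaussian Γ_μ(X) := γ(ℒ_μ(X); μ) tends to 0.2·μ^{−1/2} as X → 1/2 within {X ≠ 1/2}; that is, after composition with the domain mapping ℒ_μ (choosing the mapping parameter τ = μ), the feature of every mapped snapshot is located at the fixed reference coordinate X = 1/2, independently of μ. -/

import Mathlib

/-!
Near its cutoff `c` from the left, the cutoff Gaussian `θ(·; (a, b, c))` tends to its amplitude
`a`, and it vanishes to the right of `c`. In `γ(·; μ)` the two cutoff Gaussians have reflected
supports meeting at `μ`, so on each side of `μ` exactly one of them is active and tends to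
`0.2 μ^{-1/2}`. The map `ℒ_μ` sends `1/2` to `μ` with derivative `1` there, hence maps punctured
neighbourhoods of `1/2` into punctured neighbourhoods of `μ`.
-/

/-- The cutoff Gaussian θ(x; (a,b,c)). -/
noncomputable def theta (a b c x : ℝ) : ℝ :=
  if x < c then a * Real.exp (-(((x - c) / b) ^ 2)) else 0

/-- The steepening Gaussian γ(x; μ). -/
noncomputable def gammaFn (μ x : ℝ) : ℝ :=
  theta (0.2 * μ ^ (-(1 : ℝ)/2)) 0.1 μ x +
    theta (0.2 * μ ^ (-(1 : ℝ)/2)) (0.004 * μ ^ (-(2 : ℝ))) (-μ) (-x)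

/-- The parametrized domain mapping ℒ_τ(X) := X + 4(τ − 1/2)·X·(1 − X). -/
noncomputable def Lmap (τ X : ℝ) : ℝ := X + 4 * (τ - 1/2) * X * (1 - X)

open Filter Topology

section CutoffGaussian

variable (a b c : ℝ)

theorem theta_of_lt {x : ℝ} (hx : x < c) :
    theta a b c x = a * Real.exp (-(((x - c) / b) ^ 2)) :=
  if_pos hx

theorem theta_of_le {x : ℝ} (hx : c ≤ x) : theta a b c x = 0 :=
  if_neg hx.not_gt

theorem tendsto_theta_nhdsLT : Tendsto (theta a b c) (𝓝[<] c) (𝓝 a) := by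
  have hcont : Continuous fun x => a * Real.exp (-(((x - c) / b) ^ 2)) := by fun_prop
  have hlim : Tendsto (fun x => a * Real.exp (-(((x - c) / b) ^ 2))) (𝓝[<] c) (𝓝 a) := by
    simpa using (hcont.tendsto c).mono_left nhdsWithin_le_nhds
  refine hlim.congr' ?_
  filter_upwards [self_mem_nhdsWithin] with x hx using (theta_of_lt a b c hx).symm

theorem tendsto_theta_nhdsGT : Tendsto (theta a b c) (𝓝[>] c) (𝓝 0) :=
  tendsto_const_nhds.congr' <| eventually_nhdsWithin_of_forall fun _ hx =>
    (theta_of_le a b c (le_of_lt hx)).symm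

end CutoffGaussian

theorem tendsto_gammaFn_nhdsNE (μ : ℝ) :
    Tendsto (gammaFn μ) (𝓝[≠] μ) (𝓝 (0.2 * μ ^ (-(1 : ℝ)/2))) := by
  set A : ℝ := 0.2 * μ ^ (-(1 : ℝ)/2)
  set B : ℝ := 0.004 * μ ^ (-(2 : ℝ))
  have hleft : Tendsto (fun x => theta A B (-μ) (-x)) (𝓝[<] μ) (𝓝 0) :=
    (tendsto_theta_nhdsGT A B (-μ)).comp (by simpa using tendsto_neg_nhdsLT_neg (a := -μ))
  have hright : Tendsto (fun x => theta A B (-μ) (-x)) (𝓝[>] μ) (𝓝 A) :=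
    (tendsto_theta_nhdsLT A B (-μ)).comp (by simpa using tendsto_neg_nhdsGT_neg (a := -μ))
  show Tendsto (fun x => theta A 0.1 μ x + theta A B (-μ) (-x)) _ _
  rw [← nhdsLT_sup_nhdsGT, tendsto_sup]
  exact ⟨by simpa using (tendsto_theta_nhdsLT A 0.1 μ).add hleft,
    by simpa using (tendsto_theta_nhdsGT A 0.1 μ).add hright⟩

theorem hasDerivAt_Lmap (τ X : ℝ) :
    HasDerivAt (Lmap τ) (1 + 4 * (τ - 1/2) * (1 - 2 * X)) X := by
  have h := (hasDerivAt_id' X).fun_add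
    (((hasDerivAt_id' X).const_mul (4 * (τ - 1/2))).fun_mul ((hasDerivAt_id' X).const_sub 1))
  unfold Lmap
  exact h.congr_deriv (by ring)

theorem Lmap_half (τ : ℝ) : Lmap τ (1/2) = τ := by
  unfold Lmap; ring

theorem tendsto_Lmap_nhdsNE_half (τ : ℝ) : Tendsto (Lmap τ) (𝓝[≠] (1/2)) (𝓝[≠] τ) := by
  have h := (hasDerivAt_Lmap τ (1/2)).tendsto_nhdsNE (by norm_num)
  rwa [Lmap_half] at h

theorem mapped_steepening_gaussian_limit_general (μ : ℝ) :
    Filter.Tendsto (fun X => gammaFn μ (Lmap μ X))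
      (nhdsWithin (1/2) {X : ℝ | X ≠ 1/2})
      (nhds (0.2 * μ ^ (-(1 : ℝ)/2))) := by
  exact (tendsto_gammaFn_nhdsNE μ).comp (tendsto_Lmap_nhdsNE_half μ)

/-- For μ ∈ (1/4, 3/4), the mapped steepening Gaussian Γ_μ(X) := γ(ℒ_μ(X); μ) tends to
0.2·μ^{−1/2} as X → 1/2 through values X ≠ 1/2: after composition with ℒ_μ the feature
sits at the fixed reference coordinate X = 1/2, independently of μ. -/
theorem mapped_steepening_gaussian_limit (μ : ℝ) (hμ : μ ∈ Set.Ioo (1/4 : ℝ) (3/4)) :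
    Filter.Tendsto (fun X => gammaFn μ (Lmap μ X))
      (nhdsWithin (1/2) {X : ℝ | X ≠ 1/2})
      (nhds (0.2 * μ ^ (-(1 : ℝ)/2))) :=
  mapped_steepening_gaussian_limit_general μ
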